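/- Let y be obtained from a binary string x by deleting one symbol equal to 0 and one symbol equal to 1. If N_{0000}(y) − N_{0000}(x) mod 7 ∈ {1,2,3} and N_{1111}(x) ≡ N_{1111}(y) (mod 7), then the deleted 1 lies in a run of x of length 1 and the string 1111 is preserved from x to y. -/

import Mathlib

/-- Delete from `x` the symbols at the positions in `S`. -/
def deleteIdxs (x : List Bool) (S : Finset ℕ) : List Bool :=
  ((List.range x.length).filter (fun i => decide (i ∉ S))).map (fun i => x.getD i false)

/-- `w` occurs in `x` at position `i`. -/
def occursAt (w x : List Bool) (i : ℕ) : Prop := w <+: x.drop i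

/-- The number of (possibly overlapping) occurrences of `w` in `x`. -/
def Nw (w x : List Bool) : ℕ :=
  ((Finset.range x.length).filter (fun i => w <+: x.drop i)).card

/-- The position in the shortened string of the junction produced by deleting position `k`. -/
def junction (S : Finset ℕ) (k : ℕ) : ℕ :=
  ((Finset.range k).filter (fun m => m ∉ S)).card

/-- `w` is preserved from `x` to `y`: some set `S` of deleted positions realizing `y`
destroys no occurrence of `w` in `x` and no occurrence of `w` in `y` spans a junction. -/
def Preserved (w x y : List Bool) : Prop :=
  ∃ S : Finset ℕ,
    (∀ k ∈ S, k < x.length) ∧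
    S.card + y.length = x.length ∧
    deleteIdxs x S = y ∧
    (∀ i, occursAt w x i → ∀ k ∈ S, ¬ (i ≤ k ∧ k < i + w.length)) ∧
    (∀ j, occursAt w y j → ∀ k ∈ S, ¬ (j < junction S k ∧ junction S k < j + w.length))

/-- `x` has a (maximal) run of length `ℓ` starting at position `i`. -/
def runAt (x : List Bool) (i ℓ : ℕ) : Prop :=
  0 < ℓ ∧ i + ℓ ≤ x.length ∧
  (∀ j, i ≤ j → j < i + ℓ → x.getD j false = x.getD i false) ∧
  (i = 0 ∨ x.getD (i - 1) false ≠ x.getD i false) ∧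
  (i + ℓ = x.length ∨ x.getD (i + ℓ) false ≠ x.getD i false)

/-- position `k` of `x` lies in a run of length `ℓ`. -/
def inRun (x : List Bool) (k ℓ : ℕ) : Prop := ∃ i, runAt x i ℓ ∧ i ≤ k ∧ k < i + ℓ

def w0000 : List Bool := [false, false, false, false]
def w1111 : List Bool := [true, true, true, true]
def w11011 : List Bool := [true, true, false, true, true]
def w110011 : List Bool := [true, true, false, false, true, true]

/-- The set of strings obtainable from `x` by deleting two symbols. -/
def D2 (x : List Bool) : Set (List Bool) :=
  { y | ∃ i j : ℕ, i < j ∧ j < x.length ∧ y = deleteIdxs x ({i, j} : Finset ℕ) }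

/-- run-length representation of the runs of ones, in order. -/
def tau1 (x : List Bool) : List ℕ :=
  ((x.splitBy (· == ·)).filter (fun r => r.headD false)).map List.length

/-- the subsequence of `tau1` of entries at least 2. -/
def tauGe2 (x : List Bool) : List ℕ := (tau1 x).filter (fun ℓ => decide (2 ≤ ℓ))

/-- sum of the odd-indexed entries. -/
def oddIdxSum (l : List ℕ) : ℕ :=
  ((Finset.range l.length).filter (fun i => i % 2 = 1)).sum (fun i => l.getD i 0)


/-!
Let `y` be `x` with the positions `e ≠ f` deleted. Its `m`-th symbol is `x[keptPos e f m]`, and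
a window of length 4 of `y` that does not straddle a junction is a window of `x`; conversely a
window of `x` avoiding `e` and `f` survives in `y`. Comparing the blocks `cccc` of `x` and `y`
through these maps: when a `0` and a `1` are deleted, `N₀₀₀₀` drops by at most 3 and rises only
through blocks straddling the junction of the deleted `1`, of which there are at most 3. So a
residue in `{1, 2, 3}` mod 7 forces such a block, whose two symbols around the junction are the
neighbours of the deleted `1` in `x`: both are `0`, and the `1` is a run of length 1. Then no
`1111` of `x` meets a deleted position, so `N₁₁₁₁(y) - N₁₁₁₁(x)` is the number of `1111` of `y`
straddling a junction, at most 6; the congruence mod 7 makes it 0, which is preservation.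
-/

namespace TwoDeletions

lemma occursAt_replicate_iff (n : ℕ) (c : Bool) (l : List Bool) (j : ℕ) :
    occursAt (List.replicate n c) l j ↔ ∀ t < n, l[j + t]? = some c := by
  simp [occursAt, List.prefix_iff_getElem?, List.getElem?_drop]

def BlockAt (c : Bool) (l : List Bool) (j : ℕ) : Prop := ∀ t < 4, l[j + t]? = some c

instance (c : Bool) (l : List Bool) : DecidablePred (BlockAt c l) :=
  fun _ => inferInstanceAs (Decidable (∀ t < 4, _))

def blocks (c : Bool) (l : List Bool) : Finset ℕ := (Finset.range l.length).filter (BlockAt c l)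

lemma Nw_replicate (c : Bool) (l : List Bool) :
    Nw (List.replicate 4 c) l = (blocks c l).card := by
  unfold Nw blocks
  congr 1
  exact Finset.filter_congr fun j _ => occursAt_replicate_iff 4 c l j

lemma BlockAt.lt_length {c : Bool} {l : List Bool} {j : ℕ} (h : BlockAt c l j) :
    j < l.length :=
  (List.getElem?_eq_some_iff.1 (h 0 (by norm_num))).1

lemma mem_blocks {c : Bool} {l : List Bool} {j : ℕ} : j ∈ blocks c l ↔ BlockAt c l j := by
  simp only [blocks, Finset.mem_filter, Finset.mem_range, and_iff_right_iff_imp]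
  exact BlockAt.lt_length

lemma BlockAt.getElem?_eq {c : Bool} {l : List Bool} {j k : ℕ} (h : BlockAt c l j) (hj : j ≤ k)
    (hk : k < j + 4) : l[k]? = some c := by
  simpa [Nat.add_sub_cancel' hj] using h (k - j) (by omega)

/-- The position in `x` of the `m`-th symbol of `deleteIdxs x {e, f}`. -/
def keptPos (e f m : ℕ) : ℕ :=
  if m < min e f then m else if m + 1 < max e f then m + 1 else m + 2

section
variable {e f : ℕ}

lemma junction_pair (hef : e ≠ f) (k : ℕ) :
    junction {e, f} k = k - (if e < k then 1 else 0) - (if f < k then 1 else 0) := by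
  induction k with
  | zero => simp [junction]
  | succ k ih =>
    unfold junction at ih ⊢
    rw [Finset.range_add_one, Finset.filter_insert]
    by_cases hk : k ∈ ({e, f} : Finset ℕ)
    · rw [if_neg (not_not.2 hk), ih]
      simp only [Finset.mem_insert, Finset.mem_singleton] at hk
      split_ifs <;> omega
    · rw [if_pos hk, Finset.card_insert_of_notMem (by simp), ih]
      simp only [Finset.mem_insert, Finset.mem_singleton] at hk
      split_ifs <;> omega

lemma filter_range_notMem_pair (hef : e ≠ f) (n : ℕ) :
    (List.range n).filter (fun i => decide (i ∉ ({e, f} : Finset ℕ)))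
      = (List.range (junction {e, f} n)).map (keptPos e f) := by
  induction n with
  | zero => simp [junction]
  | succ n ih =>
    rw [List.range_succ, List.filter_append, ih]
    by_cases hn : n = e ∨ n = f
    · have : junction {e, f} (n + 1) = junction {e, f} n := by
        rw [junction_pair hef, junction_pair hef]; split_ifs <;> omega
      simp [this]; omega
    · have hj : junction {e, f} (n + 1) = junction {e, f} n + 1 := by
        rw [junction_pair hef, junction_pair hef]; split_ifs <;> omega
      have hk : keptPos e f (junction {e, f} n) = n := by
        rw [junction_pair hef]; unfold keptPos; split_ifs <;> omega
      simp only [not_or] at hn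
      simp [hj, List.range_succ, hk, hn]

variable {x : List Bool}

lemma deleteIdxs_pair (hef : e ≠ f) (he : e < x.length) (hf : f < x.length) :
    deleteIdxs x {e, f} =
      (List.range (x.length - 2)).map (fun j => x.getD (keptPos e f j) false) := by
  have : junction {e, f} x.length = x.length - 2 := by
    rw [junction_pair hef, if_pos he, if_pos hf]; omega
  rw [deleteIdxs, filter_range_notMem_pair hef, List.map_map, this]
  rfl

lemma length_deleteIdxs_pair (hef : e ≠ f) (he : e < x.length) (hf : f < x.length) :
    (deleteIdxs x {e, f}).length = x.length - 2 := by
  simp [deleteIdxs_pair hef he hf]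

lemma getElem?_deleteIdxs_pair (hef : e ≠ f) (he : e < x.length) (hf : f < x.length) (j : ℕ) :
    (deleteIdxs x {e, f})[j]? = x[keptPos e f j]? := by
  by_cases hj : j < x.length - 2
  · have : keptPos e f j < x.length := by unfold keptPos; split_ifs <;> omega
    rw [deleteIdxs_pair hef he hf, List.getElem?_map, List.getElem?_range hj,
      List.getElem?_eq_getElem this]
    simp [List.getD_eq_getElem?_getD, List.getElem?_eq_getElem this]
  · have : x.length ≤ keptPos e f j := by unfold keptPos; split_ifs <;> omega
    rw [List.getElem?_eq_none this, List.getElem?_eq_none]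
    rw [length_deleteIdxs_pair hef he hf]; omega

lemma keptPos_strictMono : StrictMono (keptPos e f) := by
  intro a b h; unfold keptPos; split_ifs <;> omega

lemma keptPos_junction (hef : e ≠ f) {k : ℕ} (hke : k ≠ e) (hkf : k ≠ f) :
    keptPos e f (junction {e, f} k) = k := by
  rw [junction_pair hef]; unfold keptPos; split_ifs <;> omega

def Straddles (j u : ℕ) : Prop := j < u ∧ u < j + 4

instance (j u : ℕ) : Decidable (Straddles j u) := inferInstanceAs (Decidable (_ ∧ _))

variable {c : Bool}

lemma blockAt_keptPos (hef : e ≠ f) (he : e < x.length) (hf : f < x.length) {j : ℕ}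
    (hj : BlockAt c (deleteIdxs x {e, f}) j) (hjf : ¬ Straddles j (junction {e, f} f))
    (hje : ¬ Straddles j (junction {e, f} e) ∨ x[e]? = some c) :
    BlockAt c x (keptPos e f j) := by
  intro t ht
  by_cases hp : keptPos e f j + t = e
  · rw [hp]
    refine hje.resolve_left fun hje => ?_
    unfold Straddles at hje hjf; rw [junction_pair hef] at hje hjf
    unfold keptPos at hp; split_ifs at hp hje hjf <;> omega
  · obtain ⟨t', ht', hkt⟩ : ∃ t' < 4, keptPos e f (j + t') = keptPos e f j + t := by
      by_cases hs : e < keptPos e f j + t ∧ keptPos e f j < e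
      · refine ⟨t - 1, by omega, ?_⟩
        unfold Straddles at hjf; rw [junction_pair hef] at hjf
        unfold keptPos at hs ⊢; split_ifs at hs hjf ⊢ <;> omega
      · refine ⟨t, ht, ?_⟩
        unfold Straddles at hjf; rw [junction_pair hef] at hjf
        unfold keptPos at hs hp ⊢; split_ifs at hs hp hjf ⊢ <;> omega
    rw [← hkt, ← getElem?_deleteIdxs_pair hef he hf]
    exact hj t' ht'

lemma blockAt_junction (hef : e ≠ f) (he : e < x.length) (hf : f < x.length) {s : ℕ}
    (hs : BlockAt c x s) (hse : ¬ (s ≤ e ∧ e < s + 4)) (hsf : ¬ (s ≤ f ∧ f < s + 4)) :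
    BlockAt c (deleteIdxs x {e, f}) (junction {e, f} s) ∧
      ¬ Straddles (junction {e, f} s) (junction {e, f} e) ∧
      ¬ Straddles (junction {e, f} s) (junction {e, f} f) := by
  refine ⟨fun t ht => ?_, ?_, ?_⟩
  · have : keptPos e f (junction {e, f} s + t) = s + t := by
      rw [junction_pair hef]; unfold keptPos; split_ifs <;> omega
    rw [getElem?_deleteIdxs_pair hef he hf, this]
    exact hs t ht
  all_goals unfold Straddles; rw [junction_pair hef, junction_pair hef]; split_ifs <;> omega

lemma card_filter_blocks_deleteIdxs_le {P : ℕ → Prop} [DecidablePred P]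
    (hP : ∀ j, BlockAt c (deleteIdxs x {e, f}) j → P j → BlockAt c x (keptPos e f j)) :
    ((blocks c (deleteIdxs x {e, f})).filter P).card ≤ (blocks c x).card := by
  refine Finset.card_le_card_of_injOn (keptPos e f) (fun j hj => ?_)
    keptPos_strictMono.injective.injOn
  rw [Finset.mem_coe, Finset.mem_filter, mem_blocks] at hj
  exact mem_blocks.2 (hP j hj.1 hj.2)

lemma card_filter_blocks_le (hef : e ≠ f) (he : e < x.length) (hf : f < x.length)
    {Q : ℕ → Prop} [DecidablePred Q]
    (hQ : ∀ s, BlockAt c x s → Q s →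
      ¬ (s ≤ e ∧ e < s + 4) ∧ ¬ (s ≤ f ∧ f < s + 4)) :
    ((blocks c x).filter Q).card ≤ ((blocks c (deleteIdxs x {e, f})).filter fun j =>
      ¬ Straddles j (junction {e, f} e) ∧ ¬ Straddles j (junction {e, f} f)).card := by
  refine Finset.card_le_card_of_injOn (junction {e, f}) (fun s hs => ?_) (fun a ha b hb hab => ?_)
  · rw [Finset.mem_coe, Finset.mem_filter, mem_blocks] at hs
    obtain ⟨hse, hsf⟩ := hQ s hs.1 hs.2
    obtain ⟨hb, hne, hnf⟩ := blockAt_junction hef he hf hs.1 hse hsf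
    simp only [Finset.mem_coe, Finset.mem_filter, mem_blocks]
    exact ⟨hb, hne, hnf⟩
  · simp only [Finset.mem_coe, Finset.mem_filter, mem_blocks] at ha hb
    obtain ⟨hae, haf⟩ := hQ a ha.1 ha.2
    obtain ⟨hbe, hbf⟩ := hQ b hb.1 hb.2
    rw [← keptPos_junction hef (k := a) (by omega) (by omega),
      ← keptPos_junction hef (k := b) (by omega) (by omega), hab]

lemma card_filter_straddles_le (B : Finset ℕ) (u : ℕ) :
    (B.filter (Straddles · u)).card ≤ 3 := by
  calc (B.filter (Straddles · u)).card ≤ (Finset.Ico (u - 3) u).card :=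
        Finset.card_le_card fun j hj => by
          obtain ⟨-, hju, huj⟩ := Finset.mem_filter.1 hj
          simp only [Finset.mem_Ico]; omega
    _ ≤ 3 := by simp only [Nat.card_Ico]; omega

lemma card_blocks_deleteIdxs_le_add_card_straddles (hef : e ≠ f) (he : e < x.length)
    (hf : f < x.length) (hce : x[e]? = some c) :
    (blocks c (deleteIdxs x {e, f})).card ≤ (blocks c x).card +
      ((blocks c (deleteIdxs x {e, f})).filter (Straddles · (junction {e, f} f))).card := by
  have hkept := card_filter_blocks_deleteIdxs_le (P := fun j => ¬ Straddles j (junction {e, f} f))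
    fun j hj hjf => blockAt_keptPos hef he hf hj hjf (Or.inr hce)
  have := Finset.card_filter_add_card_filter_not (s := blocks c (deleteIdxs x {e, f}))
    (Straddles · (junction {e, f} f))
  omega

lemma blockAt_junction_sub_three (hef : e ≠ f) (he : e < x.length) (hf : f < x.length)
    (he3 : 3 ≤ e) (hleft : BlockAt c x (e - 3)) (hright : BlockAt c x e) (hcf : x[f]? ≠ some c) :
    BlockAt c (deleteIdxs x {e, f}) (junction {e, f} (e - 3)) ∧
      Straddles (junction {e, f} (e - 3)) (junction {e, f} e) := by
  have hx : ∀ p, e - 3 ≤ p → p ≤ e + 3 → x[p]? = some c := fun p h₁ h₂ => by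
    rcases le_or_gt p e with hp | hp
    exacts [hleft.getElem?_eq h₁ (by omega), hright.getElem?_eq hp.le (by omega)]
  have hfar : f + 3 < e ∨ e + 3 < f := by
    by_contra! h
    exact hcf (hx f (by omega) (by omega))
  refine ⟨fun t ht => ?_, ?_⟩
  · rw [getElem?_deleteIdxs_pair hef he hf]
    apply hx <;> (rw [junction_pair hef]; unfold keptPos; split_ifs <;> omega)
  · unfold Straddles; rw [junction_pair hef, junction_pair hef]; split_ifs <;> omega

lemma card_blocks_le_card_blocks_deleteIdxs_add_three (hef : e ≠ f) (he : e < x.length)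
    (hf : f < x.length) (hcf : x[f]? ≠ some c) :
    (blocks c x).card ≤ (blocks c (deleteIdxs x {e, f})).card + 3 := by
  have hfar := card_filter_blocks_le hef he hf (c := c) (Q := fun s => ¬ (s ≤ e ∧ e < s + 4))
    fun s hs hse => ⟨hse, fun hsf => hcf (hs.getElem?_eq hsf.1 hsf.2)⟩
  have hsplit :=
    Finset.card_filter_add_card_filter_not (s := blocks c x) fun s => s ≤ e ∧ e < s + 4
  set B := blocks c (deleteIdxs x {e, f})
  set near := (blocks c x).filter fun s => s ≤ e ∧ e < s + 4
  set kept :=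
    B.filter fun j => ¬ Straddles j (junction {e, f} e) ∧ ¬ Straddles j (junction {e, f} f)
  have hnear : near ⊆ Finset.Ico (e - 3) (e + 1) := fun s hs => by
    rw [Finset.mem_filter] at hs; rw [Finset.mem_Ico]; omega
  by_cases hsmall : near.card ≤ 3
  · have : kept.card ≤ B.card := Finset.card_filter_le _ _
    omega
  · -- all four windows through `e` are blocks, so `x` is constant on `[e - 3, e + 3]`
    have hIco := Finset.card_le_card hnear
    rw [Nat.card_Ico] at hIco
    have hfull : near = Finset.Ico (e - 3) (e + 1) :=
      Finset.eq_of_subset_of_card_le hnear (by rw [Nat.card_Ico]; omega)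
    have hmem : ∀ s ∈ Finset.Ico (e - 3) (e + 1), BlockAt c x s := fun s hs => by
      rw [← hfull, Finset.mem_filter, mem_blocks] at hs; exact hs.1
    obtain ⟨hblock, hstr⟩ := blockAt_junction_sub_three hef he hf (by omega)
      (hmem _ (by simp)) (hmem _ (by simp)) hcf
    have : kept.card < B.card := Finset.card_lt_card <| Finset.filter_ssubset.2
      ⟨_, mem_blocks.2 hblock, fun h => h.1 hstr⟩
    omega

lemma not_straddles_of_modEq (hef : e ≠ f) (he : e < x.length) (hf : f < x.length)
    (hx : ∀ s, BlockAt c x s → ¬ (s ≤ e ∧ e < s + 4) ∧ ¬ (s ≤ f ∧ f < s + 4))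
    (hmod : (blocks c x).card ≡ (blocks c (deleteIdxs x {e, f})).card [MOD 7])
    {j : ℕ} (hj : BlockAt c (deleteIdxs x {e, f}) j) :
    ¬ Straddles j (junction {e, f} e) ∧ ¬ Straddles j (junction {e, f} f) := by
  set B := blocks c (deleteIdxs x {e, f})
  set P := fun j => ¬ Straddles j (junction {e, f} e) ∧ ¬ Straddles j (junction {e, f} f)
  have hA : (blocks c x).card ≤ (B.filter P).card := by
    simpa using card_filter_blocks_le hef he hf (Q := fun _ => True) fun s hs _ => hx s hs
  have hkept : (B.filter P).card ≤ (blocks c x).card := card_filter_blocks_deleteIdxs_le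
    fun j hj hP => blockAt_keptPos hef he hf hj hP.2 (Or.inl hP.1)
  have hrest : (B.filter fun j => ¬ P j).card ≤ 6 := by
    calc (B.filter fun j => ¬ P j).card
        ≤ (B.filter (Straddles · (junction {e, f} e)) ∪
            B.filter (Straddles · (junction {e, f} f))).card := by
          refine Finset.card_le_card fun j hj => ?_
          simp only [P, Finset.mem_filter, Finset.mem_union, not_and_or, not_not] at hj ⊢
          tauto
      _ ≤ 3 + 3 := (Finset.card_union_le _ _).trans
          (add_le_add (card_filter_straddles_le _ _) (card_filter_straddles_le _ _))
  have hsplit := Finset.card_filter_add_card_filter_not (s := B) P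
  have hall : (B.filter P).card = B.card := by unfold Nat.ModEq at hmod; omega
  exact Finset.card_filter_eq_iff.1 hall j (mem_blocks.2 hj)

lemma getElem?_neighbors_of_straddles (hef : e ≠ f) (he : e < x.length) (hf : f < x.length)
    (hce : x[e]? = some c) {j : ℕ} (hj : BlockAt c (deleteIdxs x {e, f}) j)
    (hs : Straddles j (junction {e, f} f)) : x[f - 1]? = some c ∧ x[f + 1]? = some c := by
  have hy : ∀ t, j ≤ t → t < j + 4 → x[keptPos e f t]? = some c := fun t h₁ h₂ => by
    rw [← getElem?_deleteIdxs_pair hef he hf]; exact hj.getElem?_eq h₁ h₂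
  unfold Straddles at hs; rw [junction_pair hef] at hs
  constructor
  · by_cases hfe : f - 1 = e
    · rwa [hfe]
    · have := hy (junction {e, f} f - 1)
      rw [junction_pair hef] at this
      convert this (by split_ifs at hs ⊢ <;> omega) (by split_ifs at hs ⊢ <;> omega) using 3
      unfold keptPos; split_ifs <;> omega
  · by_cases hfe : f + 1 = e
    · rwa [hfe]
    · have := hy (junction {e, f} f)
      rw [junction_pair hef] at this
      convert this (by split_ifs at hs ⊢ <;> omega) (by split_ifs at hs ⊢ <;> omega) using 3
      unfold keptPos; split_ifs <;> omega

lemma BlockAt.not_covers {l : List Bool} {s k : ℕ} (hs : BlockAt c l s) (hk : l[k]? ≠ some c) :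
    ¬ (s ≤ k ∧ k < s + 4) :=
  fun h => hk (hs.getElem?_eq h.1 h.2)

lemma BlockAt.not_covers_of_neighbors {l : List Bool} {s k : ℕ} (hs : BlockAt c l s)
    (hl : l[k - 1]? ≠ some c) (hr : l[k + 1]? ≠ some c) : ¬ (s ≤ k ∧ k < s + 4) := by
  rintro ⟨h₁, h₂⟩
  rcases Nat.lt_or_ge s k with h | h
  exacts [hl (hs.getElem?_eq (by omega) (by omega)), hr (hs.getElem?_eq (by omega) (by omega))]

lemma inRun_one {b : Bool} {k : ℕ} (hk : x[k]? = some b) (hl : x[k - 1]? = some !b)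
    (hr : x[k + 1]? = some !b) : inRun x k 1 := by
  have hlen : k < x.length := (List.getElem?_eq_some_iff.1 hk).1
  refine ⟨k, ⟨one_pos, hlen, fun j h₁ h₂ => by rw [show j = k by omega], ?_, ?_⟩, le_rfl,
    by omega⟩
  all_goals right; simp [List.getD_eq_getElem?_getD, hk, hl, hr]

lemma preserved_replicate_of_not_straddles (hef : e ≠ f) (he : e < x.length) (hf : f < x.length)
    (hx : ∀ s, BlockAt c x s → ¬ (s ≤ e ∧ e < s + 4) ∧ ¬ (s ≤ f ∧ f < s + 4))
    (hy : ∀ j, BlockAt c (deleteIdxs x {e, f}) j →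
      ¬ Straddles j (junction {e, f} e) ∧ ¬ Straddles j (junction {e, f} f)) :
    Preserved (List.replicate 4 c) x (deleteIdxs x {e, f}) := by
  refine ⟨{e, f}, ?_, ?_, rfl, fun i hi k hk => ?_, fun j hj k hk => ?_⟩
  · simp only [Finset.mem_insert, Finset.mem_singleton]
    rintro k (rfl | rfl) <;> assumption
  · rw [Finset.card_pair hef, length_deleteIdxs_pair hef he hf]; omega
  · rw [occursAt_replicate_iff] at hi
    rw [List.length_replicate]
    simp only [Finset.mem_insert, Finset.mem_singleton] at hk
    rcases hk with rfl | rfl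
    exacts [(hx i hi).1, (hx i hi).2]
  · rw [occursAt_replicate_iff] at hj
    rw [List.length_replicate]
    simp only [Finset.mem_insert, Finset.mem_singleton] at hk
    rcases hk with rfl | rfl
    exacts [(hy j hj).1, (hy j hj).2]

end
end TwoDeletions

open TwoDeletions

/-- If a `0` and a `1` are deleted with `(N₀₀₀₀(y) - N₀₀₀₀(x)) mod 7 ∈ {1,2,3}` and
`N₁₁₁₁(x) ≡ N₁₁₁₁(y) (mod 7)`, then the deleted `1` lies in a run of length `1` and
`1111` is preserved. -/
theorem created_0000_case (x y : List Bool) (k₀ k₁ : ℕ) (hne : k₀ ≠ k₁)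
    (h0 : k₀ < x.length) (h1 : k₁ < x.length)
    (hv0 : x.getD k₀ false = false) (hv1 : x.getD k₁ false = true)
    (hy : y = deleteIdxs x ({k₀, k₁} : Finset ℕ))
    (hm0 : ((Nw w0000 y : ℤ) - (Nw w0000 x : ℤ)) % 7 ∈ ({1, 2, 3} : Set ℤ))
    (hm1 : Nw w1111 x ≡ Nw w1111 y [MOD 7]) :
    inRun x k₁ 1 ∧ Preserved w1111 x y := by
  subst hy
  replace hv0 : x[k₀]? = some false := by
    rw [← hv0, List.getD_eq_getElem _ _ h0, List.getElem?_eq_getElem h0]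
  replace hv1 : x[k₁]? = some true := by
    rw [← hv1, List.getD_eq_getElem _ _ h1, List.getElem?_eq_getElem h1]
  rw [show w0000 = List.replicate 4 false from rfl, Nw_replicate, Nw_replicate] at hm0
  rw [show w1111 = List.replicate 4 true from rfl] at hm1 ⊢
  rw [Nw_replicate, Nw_replicate] at hm1
  -- the count of `0000` can only grow through blocks straddling the junction of the deleted `1`
  obtain ⟨j, hj⟩ : ((blocks false (deleteIdxs x {k₀, k₁})).filter
      (Straddles · (junction {k₀, k₁} k₁))).Nonempty := by
    have := card_blocks_le_card_blocks_deleteIdxs_add_three hne h0 h1 (c := false) (by simp [hv1])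
    have := card_blocks_deleteIdxs_le_add_card_straddles hne h0 h1 hv0
    have := card_filter_straddles_le (blocks false (deleteIdxs x {k₀, k₁}))
      (junction {k₀, k₁} k₁)
    simp only [Set.mem_insert_iff, Set.mem_singleton_iff] at hm0
    rw [← Finset.card_pos]; omega
  rw [Finset.mem_filter, mem_blocks] at hj
  obtain ⟨hl, hr⟩ := getElem?_neighbors_of_straddles hne h0 h1 hv0 hj.1 hj.2
  have hx : ∀ s, BlockAt true x s →
      ¬ (s ≤ k₀ ∧ k₀ < s + 4) ∧ ¬ (s ≤ k₁ ∧ k₁ < s + 4) :=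
    fun s hs => ⟨hs.not_covers (by simp [hv0]),
      hs.not_covers_of_neighbors (by simp [hl]) (by simp [hr])⟩
  exact ⟨inRun_one hv1 hl hr, preserved_replicate_of_not_straddles hne h0 h1 hx
    fun j hj => not_straddles_of_modEq hne h0 h1 hx hm1 hj⟩
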